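/- arXiv:1907.04910 — 2 statements merged into one kernel-verified Lean document; each statement's English description precedes it below -/
import Mathlib

section
/- Let Y/X be an abelian cover of multigraphs with automorphism group G. For every non-trivial character χ of G, the leading Taylor coefficient of L_{Y/X}(u,χ)^{-1} at u = 1 is L*_{Y/X}(1,χ) = (−2)^{r_X−1} · det(D − A_χ), where D is the degree matrix of X and r_X = |E_X| − |V_X| + 1. -/
/-!  Multigraphs in the Serre formalism: a finite vertex set `V`, a finite set
`D` of darts (oriented edges / half-edges) together with a fixed-point-free
involution `inv` (reversing orientation) and a map `head` assigning to each
dart its terminal vertex.  Edges are the orbits of `inv`; loops and multiple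
edges are allowed.  -/
structure Multigraph where
  V : Type
  D : Type
  [fintypeV : Fintype V]
  [fintypeD : Fintype D]
  [decEqV : DecidableEq V]
  [decEqD : DecidableEq D]
  inv : D → D
  head : D → V
  inv_inv : ∀ d, inv (inv d) = d
  inv_ne : ∀ d, inv d ≠ d

namespace Multigraph

attribute [instance] Multigraph.fintypeV Multigraph.fintypeD Multigraph.decEqV Multigraph.decEqD

variable (Z : Multigraph)

/-- the initial vertex of a dart -/
def tail (d : Z.D) : Z.V := Z.head (Z.inv d)

/-- the number of edges `|E|`: each edge consists of exactly two darts -/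
def numEdges : ℕ := Fintype.card Z.D / 2

/-- the degree (valency) of a vertex: the number of darts with head `v`;
loops automatically count twice -/
def degree (v : Z.V) : ℕ := (Finset.univ.filter fun d : Z.D => Z.head d = v).card

/-- the number of darts with tail `v` and head `w`.  For `v ≠ w` this is the
number of edges joining `v` and `w`; for `v = w` it is twice the number of
loops at `v`. -/
def numDarts (v w : Z.V) : ℕ :=
  (Finset.univ.filter fun d : Z.D => Z.tail d = v ∧ Z.head d = w).card

/-- the number of loops at a vertex -/
def numLoops (v : Z.V) : ℕ := Z.numDarts v v / 2

/-- the number of edges between two (distinct) vertices -/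
def numEdgesBetween (v w : Z.V) : ℕ := Z.numDarts v w

def Adj (v w : Z.V) : Prop := ∃ d : Z.D, Z.tail d = v ∧ Z.head d = w

/-- a multigraph is connected if it is nonempty and any two vertices are
joined by a path -/
def Connected : Prop := Nonempty Z.V ∧ ∀ v w : Z.V, Relation.ReflTransGen Z.Adj v w

/-- no vertices of degree one -/
def NoDegreeOne : Prop := ∀ v : Z.V, Z.degree v ≠ 1

/-- adjacency using only darts from `T` -/
def AdjOn (T : Finset Z.D) (v w : Z.V) : Prop := ∃ d ∈ T, Z.tail d = v ∧ Z.head d = w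

/-- A spanning tree, described by its (inv-closed) set of darts: it is
connected, spans all vertices, and has `|V| - 1` edges (i.e. `2(|V|-1)`
darts); a connected spanning subgraph with `|V| - 1` edges is exactly a
spanning tree. -/
def IsSpanningTree (T : Finset Z.D) : Prop :=
  (∀ d ∈ T, Z.inv d ∈ T) ∧ (∀ v w : Z.V, Relation.ReflTransGen (Z.AdjOn T) v w) ∧
    T.card = 2 * (Fintype.card Z.V - 1)

/-- `κ_Z`, the number of spanning trees of `Z` -/
noncomputable def kappa : ℕ := Nat.card {T : Finset Z.D // Z.IsSpanningTree T}

/-- the adjacency matrix: the diagonal entry at `v` is twice the number of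
loops at `v`, the off-diagonal entry at `(v, w)` is the number of edges
joining `v` and `w` -/
def adjMatrix : Matrix Z.V Z.V ℤ := Matrix.of fun v w => (Z.numDarts v w : ℤ)

/-- the diagonal degree matrix -/
def degMatrix : Matrix Z.V Z.V ℤ := Matrix.diagonal fun v => (Z.degree v : ℤ)

/-- `r_Z = |E_Z| - |V_Z| + 1` -/
def r : ℕ := Z.numEdges + 1 - Fintype.card Z.V

/-- the reciprocal `ζ_Z(u)⁻¹` of the Ihara zeta function, defined through the
three-term determinant formula
`ζ_Z(u)⁻¹ = (1 - u²)^(r-1) · det (I - A u + (D - I) u²)`;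
it is a polynomial in `u`. -/
noncomputable def zetaInv : Polynomial ℚ :=
  (1 - Polynomial.X ^ 2) ^ (Z.r - 1) *
    Matrix.det
      ((1 : Matrix Z.V Z.V (Polynomial ℚ)) -
        (Polynomial.X : Polynomial ℚ) • Z.adjMatrix.map (fun a => (a : Polynomial ℚ)) +
        ((Polynomial.X : Polynomial ℚ) ^ 2) • (Z.degMatrix - 1).map (fun a => (a : Polynomial ℚ)))

/-- `ρ_w(w₀)`: the Laplacian entries -/
def rho (w w0 : Z.V) : ℤ :=
  if w = w0 then (Z.degree w0 : ℤ) - 2 * (Z.numLoops w0 : ℤ)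
  else -(Z.numEdgesBetween w w0 : ℤ)

/-- the divisor `φ(w₀) = ∑_w ρ_w(w₀) · w` -/
noncomputable def lapDiv (w0 : Z.V) : Z.V →₀ ℤ :=
  ∑ w : Z.V, Finsupp.single w (Z.rho w w0)

/-- the Laplacian map `φ : Div(Z) → Div(Z)`, on `Div(Z) = Z.V →₀ ℤ`,
sending `w₀` to `∑_w ρ_w(w₀) · w` -/
noncomputable def lap : (Z.V →₀ ℤ) →ₗ[ℤ] Z.V →₀ ℤ :=
  Finsupp.lsum ℤ fun w0 => LinearMap.toSpanSingleton ℤ _ (Z.lapDiv w0)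

/-- the degree map `deg : Div(Z) → ℤ` -/
noncomputable def divDeg : (Z.V →₀ ℤ) →ₗ[ℤ] ℤ :=
  Finsupp.lsum ℤ fun _ => (LinearMap.id : ℤ →ₗ[ℤ] ℤ)

/-- `Div⁰(Z)`, the divisors of degree zero -/
noncomputable def divZero : Submodule ℤ (Z.V →₀ ℤ) := LinearMap.ker Z.divDeg

/-- `Pr(Z)`, the principal divisors: the image of the Laplacian map -/
noncomputable def prin : Submodule ℤ (Z.V →₀ ℤ) := LinearMap.range Z.lap

end Multigraph

/-- A covering map of multigraphs: maps on vertices and darts commuting with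
the structure maps which are local isomorphisms (bijections on stars). -/
structure CoveringMap (Y X : Multigraph) where
  vmap : Y.V → X.V
  dmap : Y.D → X.D
  head_map : ∀ d, X.head (dmap d) = vmap (Y.head d)
  inv_map : ∀ d, X.inv (dmap d) = dmap (Y.inv d)
  vmap_surj : Function.Surjective vmap
  star_bij : ∀ w : Y.V, Set.BijOn dmap {d | Y.head d = w} {d | X.head d = vmap w}

/-- A Galois (regular) cover of multigraphs `Y/X` with automorphism group `G`:
a covering map together with an action of `G` on `Y` by automorphisms of the
cover which is free and transitive on each vertex fiber (so `G` is identified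
with the deck transformation group `Aut(Y/X)`). -/
structure GaloisCover (Y X : Multigraph) (G : Type) [Group G] extends CoveringMap Y X where
  actV : G →* Equiv.Perm Y.V
  actD : G →* Equiv.Perm Y.D
  act_head : ∀ g d, Y.head (actD g d) = actV g (Y.head d)
  act_inv : ∀ g d, Y.inv (actD g d) = actD g (Y.inv d)
  vmap_act : ∀ g w, vmap (actV g w) = vmap w
  dmap_act : ∀ g d, dmap (actD g d) = dmap d
  act_free : ∀ g w, actV g w = w → g = 1
  fiber_trans : ∀ w w' : Y.V, vmap w = vmap w' → ∃ g : G, actV g w = w'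

/-- the first non-vanishing Taylor coefficient of a polynomial `p` at `u = 1` -/
noncomputable def leadingCoeffAtOne {K : Type} [Field K] (p : Polynomial K) : K :=
  (Polynomial.taylor 1 p).coeff (p.rootMultiplicity 1)

/-- the idempotent `e_χ = |G|⁻¹ ∑_σ χ(σ) σ⁻¹` of `ℂ[G]` attached to a
character `χ` of a finite abelian group `G` -/
noncomputable def charIdem {G : Type} [CommGroup G] [Fintype G] (χ : G →* ℂ) :
    MonoidAlgebra ℂ G :=
  (Fintype.card G : ℂ)⁻¹ • ∑ σ : G, χ σ • MonoidAlgebra.single σ⁻¹ (1 : ℂ)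

/-- the complex-conjugate character `χ̄` -/
noncomputable def conjChar {G : Type} [CommGroup G] (χ : G →* ℂ) : G →* ℂ :=
  (starRingEnd ℂ).toMonoidHom.comp χ

/-- `e = 1 - e_{χ₁}` where `χ₁` is the trivial character -/
noncomputable def eAug (G : Type) [CommGroup G] [Fintype G] : MonoidAlgebra ℂ G :=
  1 - charIdem (1 : G →* ℂ)

/-- the augmentation ideal `I_G = ker(s : ℤ[G] → ℤ)`, as an additive
subgroup of `ℤ[G]` -/
noncomputable def augIdeal (G : Type) [CommGroup G] : AddSubgroup (MonoidAlgebra ℤ G) :=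
  AddMonoidHom.ker
    (((Finsupp.lsum ℤ fun _ : G => (LinearMap.id : ℤ →ₗ[ℤ] ℤ)).toAddMonoidHom.comp
      MonoidAlgebra.coeffAddEquiv.toAddMonoidHom :
      MonoidAlgebra ℤ G →+ ℤ))

namespace GaloisCover

variable {Y X : Multigraph} {G : Type} [CommGroup G] [Fintype G] (C : GaloisCover Y X G)

/-- the matrix `A(σ)`, relative to a choice `s` of one vertex `s v` of `Y` in
the fiber of each vertex `v` of `X`: its `(v, v')` entry is twice the number
of loops at `s v` when `v = v'` and `σ = 1`, and otherwise the number of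
edges connecting `s v` to `σ · s v'`. -/
noncomputable def Asigma (s : X.V → Y.V) (σ : G) : Matrix X.V X.V ℤ :=
  Matrix.of fun v v' => (Y.numDarts (s v) (C.actV σ (s v')) : ℤ)

/-- `A_χ = ∑_σ χ(σ) A(σ)` -/
noncomputable def Achi (s : X.V → Y.V) (χ : G →* ℂ) : Matrix X.V X.V ℂ :=
  ∑ σ : G, χ σ • (C.Asigma s σ).map fun a => (a : ℂ)

/-- the reciprocal `L_{Y/X}(u,χ)⁻¹` of the Artin-Ihara L-function, defined
through the three-term determinant formula
`L_{Y/X}(u,χ)⁻¹ = (1 - u²)^(r_X - 1) · det (I - A_χ u + (D - I) u²)`. -/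
noncomputable def LInv (s : X.V → Y.V) (χ : G →* ℂ) : Polynomial ℂ :=
  (1 - Polynomial.X ^ 2) ^ (X.r - 1) *
    Matrix.det
      ((1 : Matrix X.V X.V (Polynomial ℂ)) -
        (Polynomial.X : Polynomial ℂ) • (C.Achi s χ).map Polynomial.C +
        ((Polynomial.X : Polynomial ℂ) ^ 2) • (X.degMatrix - 1).map fun a => (a : Polynomial ℂ))

/-- `θ*_{Y/X}(1) = ∑_χ L*_{Y/X}(1,χ) e_{χ̄} ∈ ℂ[G]` (a finite sum over all
the characters of `G`) -/
noncomputable def thetaStar (s : X.V → Y.V) : MonoidAlgebra ℂ G :=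
  ∑ᶠ χ : G →* ℂ, leadingCoeffAtOne (C.LInv s χ) • charIdem (conjChar χ)

/-- `ℓ_{w_i} : Div(Y) → ℤ[G]`, on a vertex `w`: `∑_σ ρ_{w_i}(σ·w) σ⁻¹`
(here `w_i = s v`) -/
noncomputable def ell (s : X.V → Y.V) (v : X.V) (w : Y.V) : MonoidAlgebra ℤ G :=
  ∑ σ : G, Y.rho (s v) (C.actV σ w) • MonoidAlgebra.single (σ⁻¹ : G) (1 : ℤ)

/-- the `ℤ[G]`-linear extension of `ell` to `Div(Y)` -/
noncomputable def ellD (s : X.V → Y.V) (v : X.V) (Dv : Y.V →₀ ℤ) : MonoidAlgebra ℤ G :=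
  Finsupp.sum Dv fun w c => c • C.ell s v w

/-- `det_{ℤ[G]}(φ)`: the determinant of the `ℤ[G]`-linear Laplacian `φ` on the
free `ℤ[G]`-module `Div(Y) = ⊕ᵢ ℤ[G]·wᵢ`, computed in the basis `(wᵢ)ᵢ`,
i.e. the determinant of the matrix `(ℓ_{w_i}(w_j))_{i,j}`. -/
noncomputable def lapDet (s : X.V → Y.V) : MonoidAlgebra ℤ G :=
  Matrix.det (Matrix.of fun v v' => C.ell s v (s v'))

/-- the action of an element of `ℤ[G]` on `Div(Y)` -/
noncomputable def smulDiv (x : MonoidAlgebra ℤ G) (Dv : Y.V →₀ ℤ) : Y.V →₀ ℤ :=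
  Finsupp.sum x.coeff fun σ c => c • Finsupp.mapDomain (C.actV σ) Dv

/-- the action of an element of `ℂ[G]` on `Div(Y) ⊗ ℂ` -/
noncomputable def smulDivC (x : MonoidAlgebra ℂ G) (Dv : Y.V →₀ ℂ) : Y.V →₀ ℂ :=
  Finsupp.sum x.coeff fun σ c => c • Finsupp.mapDomain (C.actV σ) Dv

/-- `res : Div(Y) → Div(X)`, sending a vertex `w` to `π(w)` -/
noncomputable def res (Dv : Y.V →₀ ℤ) : X.V →₀ ℤ := Finsupp.mapDomain C.vmap Dv

/-- `cor : Div(X) → Div(Y)`, sending a vertex `v` to `∑_{w ∈ π⁻¹(v)} w` -/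
noncomputable def cor (Dv : X.V →₀ ℤ) : Y.V →₀ ℤ :=
  Finsupp.equivFunOnFinite.symm fun w => Dv (C.vmap w)

/-- the norm element `N_G = ∑_σ σ` acting on `Div(Y)` -/
noncomputable def normMap : (Y.V →₀ ℤ) →ₗ[ℤ] Y.V →₀ ℤ :=
  ∑ σ : G, Finsupp.lmapDomain ℤ ℤ (C.actV σ)

end GaloisCover

/-- An intermediate cover of a Galois cover `Y/X`, corresponding to a subgroup
`H ≤ G = Aut(Y/X)`: a multigraph `Z` (the quotient `Y/H`) which is at the
same time a Galois cover of which `Y` is a Galois `H`-cover (with the action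
of `H` being the restriction of that of `G`) and a cover of `X`, compatibly
with the covering `Y → X`. -/
structure IntermediateCover {Y X : Multigraph} {G : Type} [Group G]
    (C : GaloisCover Y X G) (H : Subgroup G) where
  Z : Multigraph
  upper : GaloisCover Y Z ↥H
  lower : CoveringMap Z X
  actV_compat : ∀ (h : ↥H) (w : Y.V), upper.actV h w = C.actV (h : G) w
  actD_compat : ∀ (h : ↥H) (d : Y.D), upper.actD h d = C.actD (h : G) d
  vmap_compat : ∀ w : Y.V, lower.vmap (upper.vmap w) = C.vmap w
  dmap_compat : ∀ d : Y.D, lower.dmap (upper.dmap d) = C.dmap d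

/-! A nonzero vector `f` in the kernel of `D - A_χ` lifts to a function `F` on the vertices of `Y`
with `F (σ • w) = χ σ * F w` which is harmonic for the Laplacian of `Y`. The Dirichlet energy
`∑_d |F (head d) - F (tail d)|²` of a harmonic function vanishes, so `F` is constant on the
connected graph `Y`, which is incompatible with `χ ≠ 1` unless `F = 0`. Hence `det (D - A_χ) ≠ 0`,
and since `1 - u² = (u - 1)(-(1 + u))`, the leading coefficient of `L_{Y/X}(u,χ)⁻¹` at `u = 1` is
the value at `1` of `(-(1 + u))^(r_X - 1) · det (I - A_χ u + (D - I) u²)`. -/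

open Finset Polynomial
open scoped Matrix

theorem leadingCoeffAtOne_X_sub_one_pow_mul {K : Type} [Field K] (k : ℕ) {q : K[X]}
    (hq : q.eval 1 ≠ 0) : leadingCoeffAtOne ((X - 1) ^ k * q) = q.eval 1 := by
  have hX1 : (X - 1 : K[X]) = X - C 1 := by simp
  have hne : (X - 1 : K[X]) ^ k * q ≠ 0 :=
    mul_ne_zero (pow_ne_zero _ (hX1 ▸ X_sub_C_ne_zero 1)) fun h => hq (by simp [h])
  have htaylor : taylor (1 : K) ((X - C 1) ^ k) = X ^ k := by
    rw [taylor_apply, pow_comp, sub_comp, X_comp, C_comp, add_sub_cancel_right]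
  rw [leadingCoeffAtOne, rootMultiplicity_mul hne, hX1, rootMultiplicity_X_sub_C_pow,
    rootMultiplicity_eq_zero (by simpa [IsRoot] using hq), add_zero, taylor_mul, htaylor]
  simpa [taylor_coeff_zero] using coeff_X_pow_mul (taylor (1 : K) q) k 0

theorem eval_one_det_one_sub_X_smul_add_X_sq_smul {n R : Type} [Fintype n] [DecidableEq n]
    [CommRing R] (A : Matrix n n R) (D : Matrix n n ℤ) :
    ((1 : Matrix n n R[X]) - (X : R[X]) • A.map C +
        (X : R[X]) ^ 2 • (D - 1).map fun a => (a : R[X])).det.eval 1 =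
      (D.map (fun a => (a : R)) - A).det := by
  rw [← coe_evalRingHom, RingHom.map_det]
  congr 1
  ext i j
  by_cases hij : i = j
  · simp [hij, eval_intCast]
  · simp [hij, neg_add_eq_sub]

namespace Multigraph

variable (Z : Multigraph)

theorem sum_head_tail_comm {M : Type} [AddCommMonoid M] (k : Z.V → Z.V → M) :
    ∑ d, k (Z.head d) (Z.tail d) = ∑ d, k (Z.tail d) (Z.head d) := by
  have hinv : Function.Involutive Z.inv := Z.inv_inv
  exact Fintype.sum_equiv (hinv.toPerm _) _ _ fun d => by
    rw [Function.Involutive.coe_toPerm, tail, tail, Z.inv_inv]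

theorem sum_head {R : Type} [NonAssocSemiring R] (u : Z.V → R) :
    ∑ d, u (Z.head d) = ∑ w, (Z.degree w : R) * u w := by
  rw [← sum_fiberwise_of_maps_to (g := Z.head) (t := univ) fun _ _ => mem_univ _]
  refine sum_congr rfl fun w _ => ?_
  rw [sum_congr rfl fun d hd => congrArg u (mem_filter.1 hd).2, sum_const, degree, nsmul_eq_mul]

theorem sum_numDarts_mul {R : Type} [NonAssocSemiring R] (u : Z.V → R) (w : Z.V) :
    ∑ w', (Z.numDarts w w' : R) * u w' = ∑ d with Z.tail d = w, u (Z.head d) := by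
  rw [← sum_fiberwise_of_maps_to (g := Z.head) (t := univ) fun _ _ => mem_univ _]
  refine sum_congr rfl fun w' _ => ?_
  rw [filter_filter, sum_congr rfl fun d hd => congrArg u (mem_filter.1 hd).2.2, sum_const,
    numDarts, nsmul_eq_mul]

def laplacian {R : Type} [Ring R] (F : Z.V → R) (w : Z.V) : R :=
  Z.degree w * F w - ∑ d with Z.tail d = w, F (Z.head d)

theorem sum_dirichlet_energy {R : Type} [CommRing R] [StarRing R] (F : Z.V → R) :
    ∑ d, star (F (Z.head d) - F (Z.tail d)) * (F (Z.head d) - F (Z.tail d)) =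
      2 * ∑ w, star (F w) * Z.laplacian F w := by
  have hcross : ∑ d, star (F (Z.tail d)) * F (Z.head d) =
      ∑ w, star (F w) * ∑ d with Z.tail d = w, F (Z.head d) := by
    rw [← sum_fiberwise_of_maps_to (g := Z.tail) (t := univ) fun _ _ => mem_univ _]
    refine sum_congr rfl fun w _ => ?_
    rw [mul_sum]
    exact sum_congr rfl fun d hd => by rw [(mem_filter.1 hd).2]
  simp only [star_sub, sub_mul, mul_sub, sum_sub_distrib, laplacian, mul_sum]
  rw [Z.sum_head_tail_comm fun _ t => star (F t) * F t,
    Z.sum_head_tail_comm fun h t => star (F h) * F t, ← mul_sum, hcross,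
    Z.sum_head fun w => star (F w) * F w]
  simp only [mul_sum, mul_left_comm (star _)]
  ring_nf
  simp only [sum_mul]

theorem head_eq_tail_of_laplacian_eq_zero {F : Z.V → ℂ} (hF : ∀ w, Z.laplacian F w = 0)
    (d : Z.D) : F (Z.head d) = F (Z.tail d) := by
  have henergy : ∑ d, Complex.normSq (F (Z.head d) - F (Z.tail d)) = 0 := by
    have := Z.sum_dirichlet_energy F
    simp only [hF, mul_zero, sum_const_zero, Complex.star_def,
      ← Complex.normSq_eq_conj_mul_self] at this
    exact_mod_cast this
  rw [sum_eq_zero_iff_of_nonneg fun _ _ => Complex.normSq_nonneg _] at henergy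
  exact sub_eq_zero.1 (Complex.normSq_eq_zero.1 (henergy d (mem_univ d)))

variable {Z}

theorem Connected.apply_eq_of_head_eq_tail (hZ : Z.Connected) {α : Type} {F : Z.V → α}
    (hF : ∀ d, F (Z.head d) = F (Z.tail d)) (a b : Z.V) : F a = F b := by
  induction hZ.2 a b with
  | refl => rfl
  | tail _ hadj ih =>
    obtain ⟨d, rfl, rfl⟩ := hadj
    rw [ih, hF d]

end Multigraph

theorem CoveringMap.degree_vmap {Y X : Multigraph} (C : CoveringMap Y X) (w : Y.V) :
    X.degree (C.vmap w) = Y.degree w := by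
  simp only [Multigraph.degree, ← Fintype.card_subtype]
  exact Fintype.card_congr (Set.BijOn.equiv C.dmap (C.star_bij w)).symm

namespace GaloisCover

section Group

variable {Y X : Multigraph} {G : Type} [Group G] (C : GaloisCover Y X G)

theorem tail_actD (σ : G) (d : Y.D) : Y.tail (C.actD σ d) = C.actV σ (Y.tail d) := by
  rw [Multigraph.tail, C.act_inv, C.act_head, Multigraph.tail]

theorem degree_actV (σ : G) (w : Y.V) : Y.degree (C.actV σ w) = Y.degree w := by
  rw [← C.degree_vmap, C.vmap_act, C.degree_vmap]

theorem laplacian_actV {R : Type} [CommRing R] {χ : G → R} {F : Y.V → R}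
    (hF : ∀ σ w, F (C.actV σ w) = χ σ * F w) (σ : G) (w : Y.V) :
    Y.laplacian F (C.actV σ w) = χ σ * Y.laplacian F w := by
  have hstar : ∑ d with Y.tail d = C.actV σ w, F (Y.head d) =
      ∑ d with Y.tail d = w, F (Y.head (C.actD σ d)) :=
    (sum_equiv (C.actD σ) (fun d => by simp [C.tail_actD]) fun _ _ => rfl).symm
  simp only [Multigraph.laplacian, hstar, C.act_head, hF, C.degree_actV, ← mul_sum]
  ring

variable (s : X.V → Y.V) (hs : ∀ v, C.vmap (s v) = v)

noncomputable def sectionEquiv : X.V × G ≃ Y.V :=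
  Equiv.ofBijective (fun p => C.actV p.2 (s p.1)) <| by
    refine ⟨fun ⟨v, σ⟩ ⟨v', σ'⟩ h => ?_, fun w => ?_⟩
    · dsimp only at h
      obtain rfl : v = v' := by simpa [C.vmap_act, hs] using congrArg C.vmap h
      have : σ'⁻¹ * σ = 1 := C.act_free _ (s v) <| by
        rw [map_mul, Equiv.Perm.mul_apply, h, ← Equiv.Perm.mul_apply, ← map_mul,
          inv_mul_cancel, map_one, Equiv.Perm.one_apply]
      rw [inv_mul_eq_one.1 this]
    · obtain ⟨σ, hσ⟩ := C.fiber_trans (s (C.vmap w)) w (hs _)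
      exact ⟨(C.vmap w, σ), hσ⟩

theorem sectionEquiv_apply (p : X.V × G) : C.sectionEquiv s hs p = C.actV p.2 (s p.1) := rfl

noncomputable def equivariantLift {R : Type} [Monoid R] (χ : G →* R) (f : X.V → R) (w : Y.V) :
    R :=
  χ ((C.sectionEquiv s hs).symm w).2 * f ((C.sectionEquiv s hs).symm w).1

variable {R : Type} [CommMonoid R] (χ : G →* R) (f : X.V → R)

theorem equivariantLift_actV_section (σ : G) (v : X.V) :
    C.equivariantLift s hs χ f (C.actV σ (s v)) = χ σ * f v := by
  rw [← sectionEquiv_apply C s hs (v, σ)]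
  simp [equivariantLift]

theorem equivariantLift_section (v : X.V) : C.equivariantLift s hs χ f (s v) = f v := by
  simpa using C.equivariantLift_actV_section s hs χ f 1 v

theorem equivariantLift_actV (σ : G) (w : Y.V) :
    C.equivariantLift s hs χ f (C.actV σ w) = χ σ * C.equivariantLift s hs χ f w := by
  obtain ⟨⟨v, τ⟩, rfl⟩ := (C.sectionEquiv s hs).surjective w
  rw [sectionEquiv_apply, ← Equiv.Perm.mul_apply, ← map_mul, equivariantLift_actV_section,
    equivariantLift_actV_section, map_mul, mul_assoc]

end Group

variable {Y X : Multigraph} {G : Type} [CommGroup G] [Fintype G] (C : GaloisCover Y X G)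
  (s : X.V → Y.V) (hs : ∀ v, C.vmap (s v) = v) (χ : G →* ℂ) (f : X.V → ℂ)

theorem Achi_mulVec_apply (v : X.V) :
    (C.Achi s χ *ᵥ f) v = ∑ d with Y.tail d = s v, C.equivariantLift s hs χ f (Y.head d) := by
  set F := C.equivariantLift s hs χ f
  calc (C.Achi s χ *ᵥ f) v
      = ∑ p : X.V × G, (Y.numDarts (s v) (C.sectionEquiv s hs p) : ℂ) *
          F (C.sectionEquiv s hs p) := by
        simp only [Matrix.mulVec, dotProduct, Achi, Asigma, Matrix.sum_apply, Matrix.smul_apply,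
          Matrix.map_apply, Matrix.of_apply, sum_mul, Fintype.sum_prod_type, F,
          sectionEquiv_apply, equivariantLift_actV_section, smul_eq_mul, Int.cast_natCast]
        exact sum_congr rfl fun _ _ => sum_congr rfl fun _ _ => by ring
    _ = ∑ w, (Y.numDarts (s v) w : ℂ) * F w :=
        (C.sectionEquiv s hs).sum_comp fun w => (Y.numDarts (s v) w : ℂ) * F w
    _ = _ := Y.sum_numDarts_mul F (s v)

theorem laplacian_equivariantLift_section (v : X.V) :
    Y.laplacian (C.equivariantLift s hs χ f) (s v) =
      ((X.degMatrix.map (fun a => (a : ℂ)) - C.Achi s χ) *ᵥ f) v := by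
  rw [Matrix.sub_mulVec, Pi.sub_apply, Achi_mulVec_apply, Multigraph.laplacian,
    equivariantLift_section, ← C.degree_vmap, hs, Multigraph.degMatrix,
    Matrix.diagonal_map Int.cast_zero, Matrix.mulVec_diagonal, Int.cast_natCast]

theorem laplacian_equivariantLift_eq_zero
    (hf : (X.degMatrix.map (fun a => (a : ℂ)) - C.Achi s χ) *ᵥ f = 0) (w : Y.V) :
    Y.laplacian (C.equivariantLift s hs χ f) w = 0 := by
  obtain ⟨⟨v, σ⟩, rfl⟩ := (C.sectionEquiv s hs).surjective w
  rw [sectionEquiv_apply, C.laplacian_actV (C.equivariantLift_actV s hs χ f),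
    laplacian_equivariantLift_section, hf, Pi.zero_apply, mul_zero]

theorem det_degMatrix_sub_Achi_ne_zero (hs : ∀ v, C.vmap (s v) = v) (hY : Y.Connected)
    (hχ : χ ≠ 1) :
    (X.degMatrix.map (fun a => (a : ℂ)) - C.Achi s χ).det ≠ 0 := by
  intro hdet
  obtain ⟨f, hf0, hf⟩ := Matrix.exists_mulVec_eq_zero_iff.2 hdet
  have hconst := hY.apply_eq_of_head_eq_tail
    (Y.head_eq_tail_of_laplacian_eq_zero (C.laplacian_equivariantLift_eq_zero s hs χ f hf))
  obtain ⟨σ, hσ⟩ : ∃ σ, χ σ ≠ 1 := by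
    by_contra! h
    exact hχ (MonoidHom.ext h)
  refine hf0 (funext fun v => by_contra fun hv => hσ ((mul_eq_right₀ hv).1 ?_))
  rw [← equivariantLift_section C s hs χ f, ← equivariantLift_actV, hconst]

end GaloisCover

theorem L_function_special_value_general (X Y : Multigraph)
    (hYconn : Y.Connected)
    {G : Type} [CommGroup G] [Fintype G] (C : GaloisCover Y X G)
    (s : X.V → Y.V) (hs : ∀ v, C.vmap (s v) = v)
    (χ : G →* ℂ) (hχ : χ ≠ 1) :
    leadingCoeffAtOne (C.LInv s χ) =
      (-2 : ℂ) ^ (X.r - 1) *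
        Matrix.det (X.degMatrix.map (fun a => (a : ℂ)) - C.Achi s χ) := by
  have hdet := C.det_degMatrix_sub_Achi_ne_zero s χ hs hYconn hχ
  have hfactor : (1 - Polynomial.X ^ 2 : ℂ[X]) = (Polynomial.X - 1) * -(1 + Polynomial.X) := by
    ring
  rw [GaloisCover.LInv, hfactor, mul_pow, mul_assoc, leadingCoeffAtOne_X_sub_one_pow_mul]
  · norm_num [eval_one_det_one_sub_X_smul_add_X_sq_smul]
  · norm_num [eval_one_det_one_sub_X_smul_add_X_sq_smul, hdet]

/-- For an abelian cover `Y/X` of multigraphs with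
automorphism group `G` and any non-trivial character `χ` of `G`, the leading
Taylor coefficient of `L_{Y/X}(u,χ)⁻¹` at `u = 1` is
`L*_{Y/X}(1,χ) = (-2)^(r_X - 1) · det (D - A_χ)`. -/
theorem L_function_special_value (X Y : Multigraph)
    (hXconn : X.Connected) (hXdeg : X.NoDegreeOne)
    (hYconn : Y.Connected) (hYdeg : Y.NoDegreeOne)
    {G : Type} [CommGroup G] [Fintype G] (C : GaloisCover Y X G)
    (s : X.V → Y.V) (hs : ∀ v, C.vmap (s v) = v)
    (χ : G →* ℂ) (hχ : χ ≠ 1) :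
    leadingCoeffAtOne (C.LInv s χ) =
      (-2 : ℂ) ^ (X.r - 1) *
        Matrix.det (X.degMatrix.map (fun a => (a : ℂ)) - C.Achi s χ) :=
  L_function_special_value_general X Y hYconn C s hs χ hχ
end

section
/- Let Y/X be an abelian cover of multigraphs with automorphism group G and covering map π. The map res: Div(Y) → Div(X), induced by w ↦ π(w), induces a surjective morphism of Z[G]-modules res: Jac(Y) → Jac(X) (with G acting trivially on Jac(X)). -/
/-!
Writing `φ(w₀) = deg(w₀)·w₀ - ∑_{head d = w₀} tail(d)`, the covering map sends the star of `w₀`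
bijectively onto the star of `π(w₀)` and preserves degrees, so `res ∘ φ_Y = φ_X ∘ res` and `res`
maps principal divisors to principal divisors. Any push-forward of divisors preserves degree,
`res` is `G`-invariant because `π ∘ σ = π`, and a set-theoretic section of `π` on vertices
lifts every degree-zero divisor of `X` to one of `Y`, giving surjectivity.
-/

namespace Multigraph

variable (Z : Multigraph)

/-- `inv` is a fixed-point-free involution on the darts from `v` to `v`, so there are evenly many. -/
lemma two_mul_numLoops (v : Z.V) : 2 * Z.numLoops v = Z.numDarts v v := by
  have hpair : ((Z.numDarts v v : ℕ) : ZMod 2) = 0 := by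
    rw [numDarts, Finset.card_eq_sum_ones, Nat.cast_sum]
    refine Finset.sum_involution (fun d _ => Z.inv d) (fun _ _ => by decide)
      (fun d _ _ => Z.inv_ne d) (fun d hd => ?_) (fun d _ => Z.inv_inv d)
    simp only [Finset.mem_filter, Finset.mem_univ, true_and] at hd ⊢
    rw [tail, Z.inv_inv]
    exact ⟨hd.2, hd.1⟩
  have := (ZMod.natCast_eq_zero_iff _ 2).mp hpair
  unfold numLoops
  omega

lemma rho_eq (w w0 : Z.V) :
    Z.rho w w0 = (if w = w0 then (Z.degree w0 : ℤ) else 0) - Z.numDarts w w0 := by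
  unfold rho numEdgesBetween
  split_ifs with h
  · subst h
    rw [← Z.two_mul_numLoops w]
    push_cast
    ring
  · ring

lemma lapDiv_eq (w0 : Z.V) :
    Z.lapDiv w0 = Finsupp.single w0 (Z.degree w0 : ℤ) -
      ∑ d ∈ Finset.univ.filter (fun d => Z.head d = w0), Finsupp.single (Z.tail d) 1 := by
  ext w
  simp only [lapDiv, Finsupp.coe_finsetSum, Finset.sum_apply, Finsupp.single_apply,
    Finset.sum_ite_eq', Finset.mem_univ, if_true, Finsupp.coe_sub, Pi.sub_apply, rho_eq,
    Finset.sum_boole, numDarts, Finset.filter_filter, eq_comm (a := w)]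
  simp only [and_comm]

lemma divDeg_mapDomain {Z' : Multigraph} (f : Z.V → Z'.V) (Dv : Z.V →₀ ℤ) :
    Z'.divDeg (Finsupp.mapDomain f Dv) = Z.divDeg Dv := by
  simp only [divDeg, Finsupp.lsum_apply, LinearMap.id_coe]
  exact Finsupp.sum_mapDomain_index (fun _ => rfl) (fun _ _ _ => rfl)

end Multigraph

namespace CoveringMap

variable {Y X : Multigraph} (π : CoveringMap Y X)

lemma tail_dmap (d : Y.D) : X.tail (π.dmap d) = π.vmap (Y.tail d) := by
  rw [Multigraph.tail, π.inv_map, π.head_map, Multigraph.tail]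

lemma sum_star_dmap {M : Type*} [AddCommMonoid M] (w : Y.V) (f : X.D → M) :
    ∑ d ∈ Finset.univ.filter (fun d => Y.head d = w), f (π.dmap d) =
      ∑ d ∈ Finset.univ.filter (fun d => X.head d = π.vmap w), f d := by
  refine Finset.sum_nbij π.dmap (fun d hd => ?_) (fun d hd d' hd' => ?_) ?_ (fun _ _ => rfl)
  · simp only [Finset.mem_filter, Finset.mem_univ, true_and] at hd ⊢
    rw [π.head_map, hd]
  · exact (π.star_bij w).injOn (by simpa using hd) (by simpa using hd')
  · simpa using (π.star_bij w).surjOn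

lemma degree_vmap_s14 (w : Y.V) : X.degree (π.vmap w) = Y.degree w := by
  simp only [Multigraph.degree, Finset.card_eq_sum_ones]
  exact (π.sum_star_dmap w fun _ => 1).symm

lemma mapDomain_lapDiv (w0 : Y.V) :
    Finsupp.mapDomain π.vmap (Y.lapDiv w0) = X.lapDiv (π.vmap w0) := by
  rw [Y.lapDiv_eq, X.lapDiv_eq, Finsupp.mapDomain_sub, Finsupp.mapDomain_single,
    Finsupp.mapDomain_finsetSum, π.degree_vmap_s14]
  simp only [Finsupp.mapDomain_single, ← π.tail_dmap]
  rw [π.sum_star_dmap w0 fun d => Finsupp.single (X.tail d) 1]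

lemma mapDomain_lap (M : Y.V →₀ ℤ) :
    Finsupp.mapDomain π.vmap (Y.lap M) = X.lap (Finsupp.mapDomain π.vmap M) := by
  have hcomm : (Finsupp.lmapDomain ℤ ℤ π.vmap).comp Y.lap
      = X.lap.comp (Finsupp.lmapDomain ℤ ℤ π.vmap) := by
    refine Finsupp.lhom_ext fun w0 n => ?_
    simp only [LinearMap.comp_apply, Finsupp.lmapDomain_apply, Finsupp.mapDomain_single,
      Multigraph.lap, Finsupp.lsum_single, LinearMap.toSpanSingleton_apply,
      Finsupp.mapDomain_smul, π.mapDomain_lapDiv]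
  exact LinearMap.congr_fun hcomm M

lemma mapDomain_vmap_mapDomain_section {s : X.V → Y.V} (hs : ∀ v, π.vmap (s v) = v)
    (Dv : X.V →₀ ℤ) : Finsupp.mapDomain π.vmap (Finsupp.mapDomain s Dv) = Dv := by
  rw [← Finsupp.mapDomain_comp, show π.vmap ∘ s = id from funext hs, Finsupp.mapDomain_id]

end CoveringMap

namespace GaloisCover

variable {Y X : Multigraph} {G : Type} [CommGroup G] (C : GaloisCover Y X G)

lemma res_lap (M : Y.V →₀ ℤ) : C.res (Y.lap M) = X.lap (C.res M) :=
  C.toCoveringMap.mapDomain_lap M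

lemma divDeg_res (Dv : Y.V →₀ ℤ) : X.divDeg (C.res Dv) = Y.divDeg Dv :=
  Y.divDeg_mapDomain C.vmap Dv

lemma res_mapDomain_actV (σ : G) (Dv : Y.V →₀ ℤ) :
    C.res (Finsupp.mapDomain (C.actV σ) Dv) = C.res Dv := by
  rw [res, res, ← Finsupp.mapDomain_comp]
  exact congrArg (Finsupp.mapDomain · Dv) (funext (C.vmap_act σ))

/-- Lift each vertex of `X` to one point of its fiber. -/
lemma exists_divDeg_eq_zero_res_eq (D' : X.V →₀ ℤ) (hD' : X.divDeg D' = 0) :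
    ∃ Dv : Y.V →₀ ℤ, Y.divDeg Dv = 0 ∧ C.res Dv = D' := by
  choose s hs using C.vmap_surj
  exact ⟨Finsupp.mapDomain s D', by rw [X.divDeg_mapDomain, hD'],
    C.toCoveringMap.mapDomain_vmap_mapDomain_section hs D'⟩

end GaloisCover

theorem res_induces_surjection_on_jacobians_general (X Y : Multigraph)
    {G : Type} [CommGroup G] (C : GaloisCover Y X G) :
    (∀ M : Y.V →₀ ℤ, ∃ N : X.V →₀ ℤ, C.res (Y.lap M) = X.lap N) ∧
    (∀ Dv : Y.V →₀ ℤ, Y.divDeg Dv = 0 → X.divDeg (C.res Dv) = 0) ∧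
    (∀ (σ : G) (Dv : Y.V →₀ ℤ),
      C.res (Finsupp.mapDomain (C.actV σ) Dv) = C.res Dv) ∧
    (∀ D' : X.V →₀ ℤ, X.divDeg D' = 0 →
      ∃ Dv : Y.V →₀ ℤ, Y.divDeg Dv = 0 ∧
        ∃ M : X.V →₀ ℤ, C.res Dv - D' = X.lap M) := by
  refine ⟨fun M => ⟨C.res M, C.res_lap M⟩, fun Dv hDv => by rw [C.divDeg_res, hDv],
    C.res_mapDomain_actV, fun D' hD' => ?_⟩
  obtain ⟨Dv, hDv, hres⟩ := C.exists_divDeg_eq_zero_res_eq D' hD'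
  exact ⟨Dv, hDv, 0, by rw [hres, sub_self, map_zero]⟩

/-- For an abelian cover `Y/X` with automorphism group `G`,
the map `res : Div(Y) → Div(X)` induces a surjective morphism of
`ℤ[G]`-modules `res : Jac(Y) → Jac(X)` (with `G` acting trivially on
`Jac(X)`): it maps principal divisors to principal divisors and degree-zero
divisors to degree-zero divisors, it is `G`-equivariant, and every class of
`Jac(X)` is the image of a class of `Jac(Y)`. -/
theorem res_induces_surjection_on_jacobians (X Y : Multigraph)
    (hXconn : X.Connected) (hXdeg : X.NoDegreeOne)
    (hYconn : Y.Connected) (hYdeg : Y.NoDegreeOne)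
    {G : Type} [CommGroup G] [Fintype G] (C : GaloisCover Y X G) :
    (∀ M : Y.V →₀ ℤ, ∃ N : X.V →₀ ℤ, C.res (Y.lap M) = X.lap N) ∧
    (∀ Dv : Y.V →₀ ℤ, Y.divDeg Dv = 0 → X.divDeg (C.res Dv) = 0) ∧
    (∀ (σ : G) (Dv : Y.V →₀ ℤ),
      C.res (Finsupp.mapDomain (C.actV σ) Dv) = C.res Dv) ∧
    (∀ D' : X.V →₀ ℤ, X.divDeg D' = 0 →
      ∃ Dv : Y.V →₀ ℤ, Y.divDeg Dv = 0 ∧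
        ∃ M : X.V →₀ ℤ, C.res Dv - D' = X.lap M) :=
  res_induces_surjection_on_jacobians_general X Y C
end
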